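/- arXiv:2108.13720 — 3 statements merged into one kernel-verified Lean document; each statement's English description precedes it below -/
import Mathlib

section
/- The Euclidean distance matrix of any collection of N points in ℝ^K has rank at most K + 2. -/
/-!
Writing `s u = ‖p_u‖²`, the identity `‖p_u - p_v‖² = s u + s v - 2 ⟪p_u, p_v⟫` says
`D = s 1ᵀ + 1 sᵀ - 2 P Pᵀ = [-2P | s | 1] * [P | 1 | s]ᵀ`, a product through `K + 2` columns.
-/

open Matrix

/-- Squared Euclidean distance between two vectors in `Fin K → ℝ`. -/
noncomputable def sqDist {K : ℕ} (x y : Fin K → ℝ) : ℝ :=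
  ‖(WithLp.equiv 2 (Fin K → ℝ)).symm (x - y)‖ ^ 2

lemma sqDist_eq_dotProduct {K : ℕ} (x y : Fin K → ℝ) :
    sqDist x y = x ⬝ᵥ x + y ⬝ᵥ y - 2 * (x ⬝ᵥ y) := by
  rw [sqDist, EuclideanSpace.real_norm_sq_eq]
  simp only [dotProduct, ← Finset.sum_add_distrib, Finset.mul_sum, ← Finset.sum_sub_distrib]
  refine Finset.sum_congr rfl fun i _ => ?_
  simp only [WithLp.equiv_symm_apply, WithLp.toLp_sub, PiLp.sub_apply]
  ring

theorem Matrix.rank_le_card_add_two_of_apply_eq_add_add_dotProduct {R m k : Type*} [CommRing R]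
    [StrongRankCondition R] [Fintype m] [Fintype k] (a b : m → R) (P Q : Matrix m k R)
    (D : Matrix m m R) (hD : ∀ u v, D u v = a u + b v + P u ⬝ᵥ Q v) :
    D.rank ≤ Fintype.card k + 2 := by
  have hfactor : D = fromCols P (of fun u => ![a u, 1]) * fromRows Qᵀ (of ![1, b]) := by
    ext u v
    rw [fromCols_mul_fromRows, hD]
    simp only [dotProduct, add_apply, mul_apply, transpose_apply, of_apply, Fin.sum_univ_two,
      cons_val_zero, cons_val_one, cons_val_fin_one, Pi.one_apply, mul_one, one_mul]
    ring
  calc D.rank ≤ Fintype.card (k ⊕ Fin 2) := by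
        rw [hfactor]
        exact (rank_mul_le_left _ _).trans (rank_le_card_width _)
    _ = Fintype.card k + 2 := by simp

/-- the Euclidean distance matrix of `N` points in `ℝ^K` has rank at most
`K + 2`. -/
theorem edm_rank_le {N K : ℕ} (P : Matrix (Fin N) (Fin K) ℝ)
    (D : Matrix (Fin N) (Fin N) ℝ) (hD : ∀ u v, D u v = sqDist (P u) (P v)) :
    D.rank ≤ K + 2 := by
  have hsum : ∀ u v, D u v = P u ⬝ᵥ P u + P v ⬝ᵥ P v + ((-2 : ℝ) • P) u ⬝ᵥ P v := by
    intro u v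
    rw [hD, sqDist_eq_dotProduct]
    simp [dotProduct, Finset.mul_sum, mul_assoc, sub_eq_add_neg]
  simpa using rank_le_card_add_two_of_apply_eq_add_add_dotProduct _ _ _ _ D hsum
end

section
/- Let p_u, p_ũ, p_v ∈ ℝ³ be three affinely independent points and let Π be the plane (affine subspace) they span. If two points q₁, q₂ ∈ ℝ³ satisfy ‖q_i - p_u‖ = d₁, ‖q_i - p_ũ‖ = d₂, ‖q_i - p_v‖ = d₃ for i = 1, 2 (the same three distances), then either q₁ = q₂ or q₂ is the reflection of q₁ across the plane Π. -/
/-!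
If `q₁ ≠ q₂`, every anchor is equidistant from them and so lies on their perpendicular bisector,
a hyperplane. The anchors span a hyperplane too, so the two coincide, and reflection in the
perpendicular bisector of `q₁ q₂` exchanges `q₁` and `q₂`.
-/

open Module AffineSubspace

namespace EuclideanGeometry

variable {V P : Type*} [NormedAddCommGroup V] [InnerProductSpace ℝ V] [MetricSpace P]
  [NormedAddTorsor V P]

instance (p₁ p₂ : P) : Nonempty (perpBisector p₁ p₂) :=
  perpBisector_nonempty.to_subtype

theorem reflection_perpBisector_left (p₁ p₂ : P)
    [(perpBisector p₁ p₂).direction.HasOrthogonalProjection] :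
    reflection (perpBisector p₁ p₂) p₁ = p₂ := by
  have hv : p₁ -ᵥ midpoint ℝ p₁ p₂ ∈ (perpBisector p₁ p₂).directionᗮ := by
    rw [direction_perpBisector, left_vsub_midpoint]
    refine Submodule.le_orthogonal_orthogonal _ (Submodule.smul_mem _ _ ?_)
    rw [← neg_vsub_eq_vsub_rev p₂ p₁]
    exact Submodule.neg_mem _ (Submodule.mem_span_singleton_self _)
  calc reflection (perpBisector p₁ p₂) p₁
      = reflection (perpBisector p₁ p₂) ((p₁ -ᵥ midpoint ℝ p₁ p₂) +ᵥ midpoint ℝ p₁ p₂) := by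
        rw [vsub_vadd]
    _ = (p₂ -ᵥ midpoint ℝ p₁ p₂) +ᵥ midpoint ℝ p₁ p₂ := by
        rw [reflection_orthogonal_vadd (midpoint_mem_perpBisector p₁ p₂) hv, neg_vsub_eq_vsub_rev,
          midpoint_vsub_left, right_vsub_midpoint]
    _ = p₂ := vsub_vadd _ _

theorem finrank_direction_perpBisector_add_one [FiniteDimensional ℝ V] {p₁ p₂ : P}
    (h : p₁ ≠ p₂) : finrank ℝ (perpBisector p₁ p₂).direction + 1 = finrank ℝ V := by
  rw [direction_perpBisector, ← finrank_span_singleton (K := ℝ) (vsub_ne_zero.mpr h.symm),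
    add_comm, Submodule.finrank_add_finrank_orthogonal]

theorem eq_or_eq_reflection_of_forall_dist_eq [FiniteDimensional ℝ V] {S : Set P}
    [Nonempty (affineSpan ℝ S)] (hS : finrank ℝ (vectorSpan ℝ S) + 1 = finrank ℝ V) {q₁ q₂ : P}
    (hd : ∀ p ∈ S, dist q₁ p = dist q₂ p) :
    q₂ = q₁ ∨ q₂ = reflection (affineSpan ℝ S) q₁ := by
  by_cases hq : q₂ = q₁
  · exact .inl hq
  have hle : affineSpan ℝ S ≤ perpBisector q₁ q₂ :=
    affineSpan_le.mpr fun p hp ↦ mem_perpBisector_iff_dist_eq'.mpr (hd p hp)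
  have hspan : affineSpan ℝ S = perpBisector q₁ q₂ := by
    have hne : (affineSpan ℝ S : Set P).Nonempty :=
      ‹Nonempty (affineSpan ℝ S)›.elim fun p ↦ ⟨p, p.2⟩
    refine eq_of_direction_eq_of_nonempty_of_le ?_ hne hle
    refine Submodule.eq_of_le_of_finrank_eq (direction_le hle) ?_
    have := finrank_direction_perpBisector_add_one (Ne.symm hq)
    rw [direction_affineSpan]
    omega
  rw [eq_reflection_of_eq_subspace hspan, reflection_perpBisector_left]
  exact .inr rfl

end EuclideanGeometry

/-- if two points of `ℝ³` have the same distances to three affinely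
independent points, then they are equal or related by reflection across the plane
spanned by the three points. -/
theorem reflection_ambiguity (pu put pv q₁ q₂ : EuclideanSpace ℝ (Fin 3))
    (d₁ d₂ d₃ : ℝ)
    (hind : AffineIndependent ℝ ![pu, put, pv])
    (h1 : dist q₁ pu = d₁) (h2 : dist q₁ put = d₂) (h3 : dist q₁ pv = d₃)
    (h1' : dist q₂ pu = d₁) (h2' : dist q₂ put = d₂) (h3' : dist q₂ pv = d₃) :
    letI : Nonempty (affineSpan ℝ ({pu, put, pv} : Set (EuclideanSpace ℝ (Fin 3)))) :=
      ⟨⟨pu, mem_affineSpan ℝ (by simp)⟩⟩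
    q₂ = q₁ ∨
      q₂ = EuclideanGeometry.reflection
        (affineSpan ℝ ({pu, put, pv} : Set (EuclideanSpace ℝ (Fin 3)))) q₁ := by
  have hplane : finrank ℝ (vectorSpan ℝ ({pu, put, pv} : Set (EuclideanSpace ℝ (Fin 3)))) = 2 := by
    have hrange : Set.range ![pu, put, pv] = {pu, put, pv} := by
      rw [Matrix.range_cons, Matrix.range_cons, Matrix.range_cons_empty, Set.singleton_union,
        Set.singleton_union]
    rw [← hrange]
    exact hind.finrank_vectorSpan (by simp)
  refine EuclideanGeometry.eq_or_eq_reflection_of_forall_dist_eq (by simp [hplane]) ?_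
  simp only [Set.mem_insert_iff, Set.mem_singleton_iff, forall_eq_or_imp, forall_eq]
  exact ⟨h1.trans h1'.symm, h2.trans h2'.symm, h3.trans h3'.symm⟩
end

section
/- Let P ∈ ℝ^{N×K} have full column rank and Z ∈ ℝ^{N×K}. Then the Sylvester equation C(PᵀP) + (PᵀP)C = PᵀZ - ZᵀP has a unique solution C, this C is skew-symmetric, and Z - PC lies in the horizontal space H_P = {W : WᵀP = PᵀW}. -/
/-!
For positive definite `A = PᵀP` the Lyapunov operator `C ↦ CA + AC` is injective: if `CA + AC = 0`
then `tr(CᴴAC) + tr(CACᴴ) = tr(Cᴴ(CA + AC)) = 0`, a sum of traces of positive semidefinite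
matrices, so `CᴴAC = 0` and hence `C = 0`; in finite dimension it is therefore bijective.
The operator commutes with transposition and `PᵀZ - ZᵀP` is skew, so uniqueness forces
`Cᵀ = -C`, and then `(Z - PC)ᵀP = ZᵀP + CPᵀP = Pᵀ(Z - PC)` by the equation.
-/

open Matrix

namespace Matrix

variable {m n R 𝕜 : Type*} [Fintype n]

theorem mulVec_injective_of_rank_eq_card {K : Type*} [Field K] {A : Matrix m n K}
    (hA : A.rank = Fintype.card n) : Function.Injective A.mulVec := by
  have hker : Module.finrank K (LinearMap.ker A.mulVecLin) = 0 := by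
    have := A.mulVecLin.finrank_range_add_finrank_ker
    rw [show Module.finrank K (LinearMap.range A.mulVecLin) = A.rank from rfl, hA,
      Module.finrank_fintype_fun_eq_card] at this
    omega
  rwa [Submodule.finrank_eq_zero, LinearMap.ker_eq_bot] at hker

theorem posDef_transpose_mul_self_of_rank_eq_card [Fintype m] {A : Matrix m n ℝ}
    (hA : A.rank = Fintype.card n) : (Aᵀ * A).PosDef := by
  simpa using PosDef.conjTranspose_mul_self A (mulVec_injective_of_rank_eq_card hA)

section lyapunov

variable [CommRing R]

def lyapunovMap (A : Matrix n n R) : Matrix n n R →ₗ[R] Matrix n n R :=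
  LinearMap.mulRight R A + LinearMap.mulLeft R A

@[simp]
theorem lyapunovMap_apply (A C : Matrix n n R) : lyapunovMap A C = C * A + A * C := rfl

theorem transpose_lyapunovMap (A C : Matrix n n R) :
    (lyapunovMap A C)ᵀ = lyapunovMap Aᵀ Cᵀ := by
  simp only [lyapunovMap_apply, transpose_add, transpose_mul, add_comm]

theorem transpose_eq_neg_of_lyapunovMap_eq {A B C : Matrix n n R}
    (hinj : Function.Injective (lyapunovMap A)) (hA : Aᵀ = A) (hB : Bᵀ = -B)
    (hC : lyapunovMap A C = B) : Cᵀ = -C :=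
  hinj <| by rw [map_neg, hC, ← hB, ← hC, transpose_lyapunovMap, hA]

theorem transpose_sub_mul_mul_eq_of_lyapunovMap_eq [Fintype m] {P Z : Matrix m n R}
    {C : Matrix n n R} (hskew : Cᵀ = -C) (hC : lyapunovMap (Pᵀ * P) C = Pᵀ * Z - Zᵀ * P) :
    (Z - P * C)ᵀ * P = Pᵀ * (Z - P * C) := by
  have hCA : C * (Pᵀ * P) = Pᵀ * Z - Zᵀ * P - Pᵀ * P * C := eq_sub_of_add_eq hC
  calc (Z - P * C)ᵀ * P = Zᵀ * P + C * (Pᵀ * P) := by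
        rw [transpose_sub, transpose_mul, hskew, Matrix.sub_mul, Matrix.neg_mul, Matrix.neg_mul,
          sub_neg_eq_add, Matrix.mul_assoc]
    _ = Pᵀ * (Z - P * C) := by rw [hCA, Matrix.mul_sub, Matrix.mul_assoc]; abel

end lyapunov

section posDef

open scoped ComplexOrder

theorem PosDef.lyapunovMap_injective [RCLike 𝕜] {A : Matrix n n 𝕜} (hA : A.PosDef) :
    Function.Injective (lyapunovMap A) := by
  classical
  rw [← LinearMap.ker_eq_bot, LinearMap.ker_eq_bot']
  intro C hC
  rw [lyapunovMap_apply] at hC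
  have hX := hA.posSemidef.conjTranspose_mul_mul_same C
  have hY := hA.posSemidef.mul_mul_conjTranspose_same C
  have htrace : (Cᴴ * A * C).trace + (C * A * Cᴴ).trace = 0 := by
    rw [trace_mul_comm (C * A), ← trace_add, Matrix.mul_assoc Cᴴ A, ← Matrix.mul_add, add_comm,
      hC, Matrix.mul_zero, trace_zero]
  have hX0 : Cᴴ * A * C = 0 := hX.trace_eq_zero_iff.mp
    ((add_eq_zero_iff_of_nonneg hX.trace_nonneg hY.trace_nonneg).mp htrace).1
  refine ext_of_mulVec_single fun i => ?_
  by_contra hne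
  rw [zero_mulVec] at hne
  have := hA.dotProduct_mulVec_pos hne
  rw [star_mulVec, dotProduct_mulVec, vecMul_vecMul, ← dotProduct_mulVec, mulVec_mulVec,
    hX0] at this
  simp at this

theorem PosDef.lyapunovMap_bijective [RCLike 𝕜] {A : Matrix n n 𝕜} (hA : A.PosDef) :
    Function.Bijective (lyapunovMap A) :=
  ⟨hA.lyapunovMap_injective, LinearMap.injective_iff_surjective.mp hA.lyapunovMap_injective⟩

end posDef

end Matrix

/-- for full-column-rank `P`, the Sylvester equation
`C(PᵀP) + (PᵀP)C = PᵀZ - ZᵀP` has a unique solution `C`; this `C` is skew-symmetric,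
and `Z - PC` lies in the horizontal space `{W : WᵀP = PᵀW}`. -/
theorem sylvester_horizontal_projection {N K : ℕ}
    (P : Matrix (Fin N) (Fin K) ℝ) (hP : P.rank = K)
    (Z : Matrix (Fin N) (Fin K) ℝ) :
    (∃! C : Matrix (Fin K) (Fin K) ℝ,
        C * (Pᵀ * P) + (Pᵀ * P) * C = Pᵀ * Z - Zᵀ * P) ∧
    ∀ C : Matrix (Fin K) (Fin K) ℝ,
      C * (Pᵀ * P) + (Pᵀ * P) * C = Pᵀ * Z - Zᵀ * P →
      Cᵀ = -C ∧ (Z - P * C)ᵀ * P = Pᵀ * (Z - P * C) := by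
  have hA : (Pᵀ * P).PosDef := posDef_transpose_mul_self_of_rank_eq_card (by simpa using hP)
  have hL := hA.lyapunovMap_bijective
  have hskew : (Pᵀ * Z - Zᵀ * P)ᵀ = -(Pᵀ * Z - Zᵀ * P) := by
    rw [transpose_sub, transpose_mul, transpose_mul, transpose_transpose, transpose_transpose,
      neg_sub]
  refine ⟨hL.existsUnique _, fun C hC => ?_⟩
  have hCskew := transpose_eq_neg_of_lyapunovMap_eq hL.injective (by simp) hskew hC
  exact ⟨hCskew, transpose_sub_mul_mul_eq_of_lyapunovMap_eq hCskew hC⟩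
end
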